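/- Let Λ = kQ/I be a bound quiver algebra such that I possesses a strict α-monomial Gröbner basis 𝒢_{p,q} for an arrow α, and let Γ = Λ/⟨ᾱ⟩. Then right multiplication by p induces isomorphisms of left modules Λ·𝔰(p) ≅ Λ·p̄ and Γ·𝔰(p) ≅ Γ·p̄, and left multiplication by q induces isomorphisms of right modules 𝔱(q)·Λ ≅ q̄·Λ and 𝔱(q)·Γ ≅ q̄·Γ. Here 𝔰(p) and 𝔱(q) denote the trivial paths (idempotents) at the source of p and the target of q, and p̄, q̄ the residue classes of p, q. -/

import Mathlib

/-! Scaffolding: path algebras of quivers, admissible ideals, monomial arrow removal,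
admissible orders and Gröbner bases, following Green. -/

open Quiver

/-- The type of all paths in a quiver `V` (with arbitrary source and target). -/
abbrev PathsIn (V : Type) [Quiver.{0} V] : Type := Σ a b : V, Quiver.Path a b

namespace PathsIn

variable {V : Type} [Quiver.{0} V]

/-- The length of a path. -/
def len (u : PathsIn V) : ℕ := u.2.2.length

/-- `u.Divides w` : the path `u` is a subpath of (divides) the path `w`,
i.e. `w = r·u·s` for (possibly trivial) paths `r`, `s`. -/
def Divides (u w : PathsIn V) : Prop :=
  ∃ (a d : V) (r : Quiver.Path a u.1) (s : Quiver.Path u.2.1 d),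
    w = ⟨a, d, (r.comp u.2.2).comp s⟩

/-- `u.ProperlyDivides w` : `u` is a proper subpath of `w`. -/
def ProperlyDivides (u w : PathsIn V) : Prop := u.Divides w ∧ u ≠ w

/-- `s.OverlapsLeftWith t` : the path `s` overlaps with the path `t` from the left,
i.e. `t = r₁·r₂` and `s = r₂·r₃` for paths `r₁, r₂, r₃` with `r₂` non-trivial.
(Equivalently, `t` overlaps with `s` from the right.) -/
def OverlapsLeftWith (s t : PathsIn V) : Prop :=
  ∃ (x : V) (r₁ : Quiver.Path t.1 x) (r₂ : Quiver.Path x t.2.1)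
    (r₃ : Quiver.Path t.2.1 s.2.1),
      0 < r₂.length ∧ t = ⟨t.1, t.2.1, r₁.comp r₂⟩ ∧ s = ⟨x, s.2.1, r₂.comp r₃⟩

end PathsIn

/-- The path of length one corresponding to an arrow. -/
def arrowPath {V : Type} [Quiver.{0} V] {a b : V} (α : a ⟶ b) : PathsIn V :=
  ⟨a, b, α.toPath⟩

/-- A path `w` avoids the arrow `α` if `α` is not a subpath of `w`. -/
def AvoidsArrow {V : Type} [Quiver.{0} V] {a b : V} (α : a ⟶ b) (w : PathsIn V) : Prop :=
  ¬ (arrowPath α).Divides w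

/-- `IsPathAlgebra k V A` : the `k`-algebra `A` is the path algebra `kQ` of the quiver `V`:
it has a `k`-basis indexed by the paths of `V`, multiplication of basis elements is given by
concatenation of composable paths (and is zero on non-composable ones), and the identity is
the sum of the trivial paths. -/
structure IsPathAlgebra (k : Type) [Field k] (V : Type) [Quiver.{0} V] [Fintype V]
    (A : Type) [Ring A] [Algebra k A] : Type where
  basis : Module.Basis (PathsIn V) k A
  mul_matched : ∀ {a b c : V} (p : Quiver.Path a b) (q : Quiver.Path b c),
    basis ⟨a, b, p⟩ * basis ⟨b, c, q⟩ = basis ⟨a, c, p.comp q⟩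
  mul_unmatched : ∀ {a b b' c : V} (p : Quiver.Path a b) (q : Quiver.Path b' c),
    b ≠ b' → basis ⟨a, b, p⟩ * basis ⟨b', c, q⟩ = 0
  one_def : (1 : A) = ∑ a : V, basis ⟨a, a, Quiver.Path.nil⟩

namespace IsPathAlgebra

variable {k : Type} [Field k] {V : Type} [Quiver.{0} V] [Fintype V]
  {A : Type} [Ring A] [Algebra k A]

/-- The path `u` occurs in the element `z` of the path algebra (i.e. `u` has a non-zero
coefficient in `z`). -/
def OccursIn (PA : IsPathAlgebra k V A) (u : PathsIn V) (z : A) : Prop :=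
  PA.basis.repr z u ≠ 0

/-- The path `u` occurs in the subset `T` of the path algebra. -/
def OccursInSet (PA : IsPathAlgebra k V A) (u : PathsIn V) (T : Set A) : Prop :=
  ∃ z ∈ T, PA.OccursIn u z

/-- An element of the path algebra avoids the arrow `α` if every path occurring in it does. -/
def ElemAvoids (PA : IsPathAlgebra k V A) {a b : V} (α : a ⟶ b) (z : A) : Prop :=
  ∀ u : PathsIn V, PA.OccursIn u z → AvoidsArrow α u

/-- A relation: a linear combination of paths of length at least two having a common source
and a common target. -/
def IsRelation (PA : IsPathAlgebra k V A) (z : A) : Prop :=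
  (∀ u : PathsIn V, PA.OccursIn u z → 2 ≤ u.len) ∧
  (∀ u v : PathsIn V, PA.OccursIn u z → PA.OccursIn v z → u.1 = v.1 ∧ u.2.1 = v.2.1)

end IsPathAlgebra

/-- The two-sided ideal of a ring generated by a subset, as a set: the additive closure of
the set of elements `r * t * s` with `t` in the generating set. -/
def ringIdealSpan {A : Type} [Ring A] (T : Set A) : Set A :=
  (AddSubgroup.closure {y : A | ∃ r s : A, ∃ t ∈ T, y = r * t * s} : AddSubgroup A)

/-- An admissible ideal of the path algebra: a two-sided ideal `I` with `J^n ⊆ I ⊆ J²`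
for some `n`, where `J` is the arrow ideal. -/
def IsAdmissibleIdeal {k : Type} [Field k] {V : Type} [Quiver.{0} V] [Fintype V]
    {A : Type} [Ring A] [Algebra k A] (PA : IsPathAlgebra k V A) (I : Set A) : Prop :=
  I = ringIdealSpan I ∧
  (∃ n : ℕ, ∀ u : PathsIn V, n ≤ u.len → PA.basis u ∈ I) ∧
  (∀ z ∈ I, ∀ u : PathsIn V, PA.OccursIn u z → 2 ≤ u.len)

/-- A presentation of the quotient of an algebra `A` by (the set underlying) a two-sided
ideal `I`: a surjective algebra homomorphism with kernel `I`. -/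
structure QuotPresentation (k : Type) [Field k] {A : Type} [Ring A] [Algebra k A]
    (I : Set A) (B : Type) [Ring B] [Algebra k B] : Type where
  proj : A →ₐ[k] B
  surj : Function.Surjective proj
  ker : ∀ z : A, proj z = 0 ↔ z ∈ I

section StrictMonomial

variable {k : Type} [Field k] {V : Type} [Quiver.{0} V] [Fintype V]
  {A : Type} [Ring A] [Algebra k A]

/-- The path `pαq`. -/
def pathPAQ {V : Type} [Quiver.{0} V] {va vb xp yq : V} (α : va ⟶ vb)
    (p : Quiver.Path xp va) (q : Quiver.Path vb yq) : PathsIn V :=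
  ⟨xp, yq, (p.comp α.toPath).comp q⟩

/-- Properties (P) for a subset `T` of the path algebra, relative to the arrow `α` and the
paths `p`, `q`:  (P1) every element of `T` other than `pαq` avoids `α`;
(P2) `p` does not overlap from the left with any path occurring in `T`;
(P2ᵒᵖ) `q` does not overlap from the right with any path occurring in `T`;
(P3) no path occurring in `T` divides `p` or `q`. -/
structure SatisfiesP (PA : IsPathAlgebra k V A) {va vb xp yq : V} (α : va ⟶ vb)
    (T : Set A) (p : Quiver.Path xp va) (q : Quiver.Path vb yq) : Prop where
  p1 : ∀ z ∈ T, z ≠ PA.basis (pathPAQ α p q) → PA.ElemAvoids α z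
  p2 : ∀ u : PathsIn V, PA.OccursInSet u T →
    ¬ PathsIn.OverlapsLeftWith ⟨xp, va, p⟩ u
  p2op : ∀ u : PathsIn V, PA.OccursInSet u T →
    ¬ PathsIn.OverlapsLeftWith u ⟨vb, yq, q⟩
  p3 : ∀ u : PathsIn V, PA.OccursInSet u T →
    ¬ u.Divides ⟨xp, va, p⟩ ∧ ¬ u.Divides ⟨vb, yq, q⟩

/-- The common context for (strict) `α`-monomial generating sets: `p`, `q` avoid `α`,
at most one of them is trivial, and `T` is a finite generating set of relations for `I`. -/
structure IsMonGenData (PA : IsPathAlgebra k V A) {va vb xp yq : V} (α : va ⟶ vb)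
    (I : Set A) (T : Set A) (p : Quiver.Path xp va) (q : Quiver.Path vb yq) : Prop where
  finite : T.Finite
  rels : ∀ t ∈ T, PA.IsRelation t
  gen : I = ringIdealSpan T
  p_avoids : AvoidsArrow α (⟨xp, va, p⟩ : PathsIn V)
  q_avoids : AvoidsArrow α (⟨vb, yq, q⟩ : PathsIn V)
  not_both_trivial : 0 < p.length ∨ 0 < q.length

/-- `T` is a strict `α`-monomial generating set for the ideal `I`, relative to the paths
`p` and `q`. -/
structure IsStrictMonomialGenSet (PA : IsPathAlgebra k V A) {va vb xp yq : V} (α : va ⟶ vb)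
    (I : Set A) (T : Set A) (p : Quiver.Path xp va) (q : Quiver.Path vb yq) : Prop where
  data : IsMonGenData PA α I T p q
  mem : PA.basis (pathPAQ α p q) ∈ T
  others_avoid : ∀ z ∈ T, z ≠ PA.basis (pathPAQ α p q) → PA.ElemAvoids α z
  no_proper_sub : ∀ u : PathsIn V, u.ProperlyDivides (pathPAQ α p q) → PA.basis u ∉ I
  no_overlap_p : ∀ u : PathsIn V, PA.OccursInSet u T →
    ¬ PathsIn.OverlapsLeftWith ⟨xp, va, p⟩ u
  no_overlap_q : ∀ u : PathsIn V, PA.OccursInSet u T →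
    ¬ PathsIn.OverlapsLeftWith u ⟨vb, yq, q⟩
  no_divide : ∀ u : PathsIn V, PA.OccursInSet u T →
    ¬ u.Divides ⟨xp, va, p⟩ ∧ ¬ u.Divides ⟨vb, yq, q⟩

/-- `T` is an `α`-monomial generating set: every element of `T` which is not (a scalar
multiple of) a path avoids `α`. -/
structure IsMonomialGenSet (PA : IsPathAlgebra k V A) {va vb : V} (α : va ⟶ vb)
    (I : Set A) (T : Set A) : Prop where
  finite : T.Finite
  rels : ∀ t ∈ T, PA.IsRelation t
  gen : I = ringIdealSpan T
  mono : ∀ t ∈ T, (∃ (u : PathsIn V) (c : k), c ≠ 0 ∧ t = c • PA.basis u) ∨ PA.ElemAvoids α t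

end StrictMonomial

section Groebner

variable {k : Type} [Field k] {V : Type} [Quiver.{0} V] [Fintype V]
  {A : Type} [Ring A] [Algebra k A]

/-- An admissible order on the set of paths of a quiver: a well-order compatible with left
and right multiplication, for which every subpath of a path precedes it. -/
structure AdmissibleOrder (V : Type) [Quiver.{0} V] : Type 1 where
  le : PathsIn V → PathsIn V → Prop
  refl : ∀ u, le u u
  trans : ∀ u v w, le u v → le v w → le u w
  antisymm : ∀ u v, le u v → le v u → u = v
  total : ∀ u v, le u v ∨ le v u
  wf : WellFounded (fun u w => le u w ∧ u ≠ w)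
  right_compat : ∀ (u w : PathsIn V), le u w → ∀ (hc : u.2.1 = w.2.1) (z : V)
    (r : Quiver.Path w.2.1 z),
      le ⟨u.1, z, u.2.2.comp (r.cast hc.symm rfl)⟩ ⟨w.1, z, w.2.2.comp r⟩
  left_compat : ∀ (u w : PathsIn V), le u w → ∀ (hc : u.1 = w.1) (z : V)
    (r : Quiver.Path z w.1),
      le ⟨z, u.2.1, (r.cast rfl hc.symm).comp u.2.2⟩ ⟨z, w.2.1, r.comp w.2.2⟩
  subpath_le : ∀ u w, PathsIn.Divides u w → le u w

/-- `IsTip PA O z u` : the path `u` is the `O`-largest path occurring in `z`. -/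
def IsTip (PA : IsPathAlgebra k V A) (O : AdmissibleOrder V) (z : A) (u : PathsIn V) : Prop :=
  PA.OccursIn u z ∧ ∀ w : PathsIn V, PA.OccursIn w z → O.le w u

/-- `G` is a Gröbner basis for the ideal `I` with respect to the admissible order `O`:
`G ⊆ I` and the tip of every non-zero element of `I` is divisible by the tip of some
element of `G`. -/
def IsGroebnerBasis (PA : IsPathAlgebra k V A) (O : AdmissibleOrder V)
    (I : Set A) (G : Set A) : Prop :=
  G ⊆ I ∧ ∀ z ∈ I, z ≠ 0 → ∃ g ∈ G, ∃ tg tz : PathsIn V,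
    IsTip PA O g tg ∧ IsTip PA O z tz ∧ tg.Divides tz

/-- A strict `α`-monomial Gröbner basis for `I`, relative to the paths `p`, `q` (which
avoid `α`, have the appropriate endpoints, and at most one of which is trivial):
`pαq ∈ 𝒢`, every other element of `𝒢` avoids `α`, and no tip of an element of `𝒢`
overlaps with `p` from the right, overlaps with `q` from the left, or divides `p` or `q`. -/
structure IsStrictMonomialGB (PA : IsPathAlgebra k V A) (O : AdmissibleOrder V)
    {va vb xp yq : V} (α : va ⟶ vb) (I : Set A) (G : Set A)
    (p : Quiver.Path xp va) (q : Quiver.Path vb yq) : Prop where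
  gb : IsGroebnerBasis PA O I G
  p_avoids : AvoidsArrow α (⟨xp, va, p⟩ : PathsIn V)
  q_avoids : AvoidsArrow α (⟨vb, yq, q⟩ : PathsIn V)
  not_both_trivial : 0 < p.length ∨ 0 < q.length
  mem : PA.basis (pathPAQ α p q) ∈ G
  others_avoid : ∀ z ∈ G, z ≠ PA.basis (pathPAQ α p q) → PA.ElemAvoids α z
  tips_no_overlap_p : ∀ g ∈ G, ∀ u : PathsIn V, IsTip PA O g u →
    ¬ PathsIn.OverlapsLeftWith ⟨xp, va, p⟩ u
  tips_no_overlap_q : ∀ g ∈ G, ∀ u : PathsIn V, IsTip PA O g u →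
    ¬ PathsIn.OverlapsLeftWith u ⟨vb, yq, q⟩
  tips_no_divide : ∀ g ∈ G, ∀ u : PathsIn V, IsTip PA O g u →
    ¬ u.Divides ⟨xp, va, p⟩ ∧ ¬ u.Divides ⟨vb, yq, q⟩

end Groebner

/-! The paths that are not divisible by a tip of `𝒢` map to a `k`-basis of `Λ`, and those
among them avoiding `α` map to a `k`-basis of `Γ`: the ideal generated by `𝒢` is spanned by the
elements `r·g·s`, and each of these either consists of `α`-avoiding paths and lies in `I`, or
consists of paths through `α`. Since no tip of `𝒢` divides `p` or overlaps it from the right,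
and `p` avoids `α`, `u·p` is again such a path whenever `u` is one ending at `𝔰(p)`. Hence
right multiplication by `p` sends the normal basis of `Λ·𝔰(p)` (resp. `Γ·𝔰(p)`) injectively
into that of `Λ` (resp. `Γ`); symmetrically for `q`. -/

namespace Quiver.Path

variable {V : Type} [Quiver.{0} V]

theorem exists_eq_comp_of_comp_eq_comp {a b b' : V} (p : Path a b) (r : Path a b') :
    ∀ {c : V} (q : Path b c) (s : Path b' c), p.comp q = r.comp s → q.length ≤ s.length →
      ∃ t : Path b' b, p = r.comp t ∧ s = t.comp q := by
  intro c q
  induction q with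
  | nil => exact fun s h _ => ⟨s, by simpa using h, s.comp_nil.symm⟩
  | cons q' e ih =>
    intro s h hl
    cases s with
    | nil => simp at hl
    | cons s' f =>
      rw [comp_cons, comp_cons] at h
      obtain rfl := obj_eq_of_cons_eq_cons h
      obtain rfl := eq_of_heq (hom_heq_of_cons_eq_cons h)
      obtain ⟨t, rfl, rfl⟩ := ih s' (eq_of_heq (heq_of_cons_eq_cons h))
        (by simpa using hl)
      exact ⟨t, rfl, rfl⟩

end Quiver.Path

namespace PathsIn

variable {V : Type} [Quiver.{0} V]

theorem mk_inj {a b a' b' : V} {x : Path a b} {x' : Path a' b'}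
    (h : (⟨a, b, x⟩ : PathsIn V) = ⟨a', b', x'⟩) : ∃ (_ : a = a') (_ : b = b'), HEq x x' := by
  obtain ⟨rfl, h⟩ := Sigma.mk.inj_iff.mp h
  obtain ⟨rfl, h⟩ := Sigma.mk.inj_iff.mp (eq_of_heq h)
  exact ⟨rfl, rfl, h⟩

theorem Divides.comp_left {d : PathsIn V} {b c : V} {y : Path b c} (h : d.Divides ⟨b, c, y⟩)
    {a : V} (x : Path a b) : d.Divides ⟨a, c, x.comp y⟩ := by
  obtain ⟨a', d', r, s, h⟩ := h
  cases h
  exact ⟨a, c, x.comp r, s, by simp [Path.comp_assoc]⟩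

theorem Divides.comp_right {d : PathsIn V} {a b : V} {x : Path a b} (h : d.Divides ⟨a, b, x⟩)
    {c : V} (y : Path b c) : d.Divides ⟨a, c, x.comp y⟩ := by
  obtain ⟨a', d', r, s, h⟩ := h
  cases h
  exact ⟨a, c, r, s.comp y, by simp [Path.comp_assoc]⟩

theorem divides_comp_cases {d₁ d₂ : V} {u : Path d₁ d₂} {a b c : V} {x : Path a b}
    {y : Path b c} (h : Divides ⟨d₁, d₂, u⟩ ⟨a, c, x.comp y⟩) :
    Divides ⟨d₁, d₂, u⟩ ⟨a, b, x⟩ ∨ Divides ⟨d₁, d₂, u⟩ ⟨b, c, y⟩ ∨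
      ∃ (x₁ : Path a d₁) (x₂ : Path d₁ b) (y₁ : Path b d₂) (y₂ : Path d₂ c),
        0 < x₂.length ∧ 0 < y₁.length ∧ x = x₁.comp x₂ ∧ y = y₁.comp y₂ ∧ u = x₂.comp y₁ := by
  obtain ⟨a', c', r, s, h⟩ := h
  dsimp only at r s h
  obtain ⟨rfl, rfl, h⟩ := mk_inj h
  have key : x.comp y = r.comp (u.comp s) := by rw [eq_of_heq h, Path.comp_assoc]
  have hlen := congrArg Path.length key
  simp only [Path.length_comp] at hlen
  by_cases hxr : x.length ≤ r.length
  · obtain ⟨t, rfl, rfl⟩ := Path.exists_eq_comp_of_comp_eq_comp _ _ _ _ key.symm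
      (by simp only [Path.length_comp]; omega)
    exact Or.inr (Or.inl ⟨b, c, t, s, by simp [Path.comp_assoc]⟩)
  by_cases hys : y.length ≤ s.length
  · obtain ⟨t, rfl, -⟩ := Path.exists_eq_comp_of_comp_eq_comp _ _ _ _
      (key.trans (Path.comp_assoc _ _ _).symm) hys
    exact Or.inl ⟨a, b, r, t, rfl⟩
  obtain ⟨x₂, rfl, h₂⟩ := Path.exists_eq_comp_of_comp_eq_comp _ _ _ _ key
    (by simp only [Path.length_comp]; omega)
  obtain ⟨y₁, rfl, rfl⟩ := Path.exists_eq_comp_of_comp_eq_comp _ _ _ _ h₂ (by omega)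
  simp only [Path.length_comp] at hlen hxr hys
  exact Or.inr (Or.inr ⟨r, x₂, y₁, s, by omega, by omega, rfl, rfl, rfl⟩)

theorem divides_comp_of_len_eq_one {d : PathsIn V} (hd : d.len = 1) {a b c : V}
    {x : Path a b} {y : Path b c} (h : d.Divides ⟨a, c, x.comp y⟩) :
    d.Divides ⟨a, b, x⟩ ∨ d.Divides ⟨b, c, y⟩ := by
  obtain ⟨d₁, d₂, u⟩ := d
  rcases divides_comp_cases h with h | h | ⟨_, x₂, y₁, _, hx₂, hy₁, -, -, rfl⟩
  · exact Or.inl h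
  · exact Or.inr h
  · simp only [len, Path.length_comp] at hd
    omega

theorem divides_comp_or_overlaps {d : PathsIn V} {a b c : V} {x : Path a b} {y : Path b c}
    (h : d.Divides ⟨a, c, x.comp y⟩) :
    d.Divides ⟨a, b, x⟩ ∨ d.Divides ⟨b, c, y⟩ ∨
      (OverlapsLeftWith ⟨b, c, y⟩ d ∧ OverlapsLeftWith d ⟨a, b, x⟩) := by
  obtain ⟨d₁, d₂, u⟩ := d
  rcases divides_comp_cases h with h | h | ⟨x₁, x₂, y₁, y₂, hx₂, hy₁, rfl, rfl, rfl⟩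
  · exact Or.inl h
  · exact Or.inr (Or.inl h)
  · exact Or.inr (Or.inr ⟨⟨b, x₂, y₁, y₂, hy₁, rfl, rfl⟩, ⟨d₁, x₁, x₂, y₁, hx₂, rfl, rfl⟩⟩)

end PathsIn

theorem avoidsArrow_comp {V : Type} [Quiver.{0} V] {va vb : V} (α : va ⟶ vb) {a b c : V}
    (x : Quiver.Path a b) (y : Quiver.Path b c) :
    AvoidsArrow α ⟨a, c, x.comp y⟩ ↔ AvoidsArrow α ⟨a, b, x⟩ ∧ AvoidsArrow α ⟨b, c, y⟩ := by
  refine ⟨fun h => ⟨fun hx => h (hx.comp_right y), fun hy => h (hy.comp_left x)⟩, ?_⟩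
  rintro ⟨hx, hy⟩ h
  exact (PathsIn.divides_comp_of_len_eq_one rfl h).elim hx hy

namespace AdmissibleOrder

variable {V : Type} [Quiver.{0} V] (O : AdmissibleOrder V)

/-- The strict order for which `O.wf` states well-foundedness. -/
def lt (u w : PathsIn V) : Prop := O.le u w ∧ u ≠ w

theorem lt_of_lt_of_le {u v w : PathsIn V} (h : O.lt u v) (h' : O.le v w) : O.lt u w :=
  ⟨O.trans _ _ _ h.1 h', fun huw => h.2 (O.antisymm _ _ h.1 (huw ▸ h'))⟩

theorem le_comp_comp {a b c d : V} (r : Path a b) (s : Path c d) {u t : Path b c}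
    (h : O.le ⟨b, c, u⟩ ⟨b, c, t⟩) :
    O.le ⟨a, d, (r.comp u).comp s⟩ ⟨a, d, (r.comp t).comp s⟩ :=
  O.right_compat _ _ (O.left_compat _ _ h rfl a r) rfl d s

end AdmissibleOrder

namespace IsPathAlgebra

variable {k : Type} [Field k] {V : Type} [Quiver.{0} V] [Fintype V]
  {A : Type} [Ring A] [Algebra k A]

section Paths

variable (PA : IsPathAlgebra k V A)

theorem sum_repr (z : A) :
    ∑ u ∈ (PA.basis.repr z).support, PA.basis.repr z u • PA.basis u = z := by
  simpa [Finsupp.linearCombination_apply, Finsupp.sum] using PA.basis.linearCombination_repr z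

theorem eq_zero_of_forall_not_occursIn {z : A} (h : ∀ u, ¬ PA.OccursIn u z) : z = 0 :=
  PA.basis.repr.injective <| Finsupp.ext fun u => by simpa [OccursIn] using h u

variable {PA}

theorem occursIn_basis {u w : PathsIn V} : PA.OccursIn w (PA.basis u) ↔ w = u := by
  classical
  simp [OccursIn, Finsupp.single_apply, eq_comm]

theorem OccursIn.of_smul {c : k} {z : A} {u : PathsIn V} (h : PA.OccursIn u (c • z)) :
    PA.OccursIn u z :=
  fun hz => h (by simp [hz])

theorem occursIn_mul {x y : A} {w : PathsIn V} (h : PA.OccursIn w (x * y)) :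
    ∃ (a b c : V) (u : Path a b) (v : Path b c),
      PA.OccursIn ⟨a, b, u⟩ x ∧ PA.OccursIn ⟨b, c, v⟩ y ∧ w = ⟨a, c, u.comp v⟩ := by
  rw [OccursIn, ← PA.sum_repr x, ← PA.sum_repr y, Finset.sum_mul_sum, map_sum,
    Finsupp.finsetSum_apply] at h
  obtain ⟨⟨a, b, u⟩, hu, h⟩ := Finset.exists_ne_zero_of_sum_ne_zero h
  rw [map_sum, Finsupp.finsetSum_apply] at h
  obtain ⟨⟨b', c, v⟩, hv, h⟩ := Finset.exists_ne_zero_of_sum_ne_zero h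
  rw [smul_mul_smul_comm] at h
  have h := OccursIn.of_smul h
  by_cases hb : b = b'
  · subst hb
    rw [PA.mul_matched, occursIn_basis] at h
    exact ⟨a, b, c, u, v, Finsupp.mem_support_iff.mp hu, Finsupp.mem_support_iff.mp hv, h⟩
  · rw [PA.mul_unmatched u v hb] at h
    exact absurd (by simp) h

theorem occursIn_basis_mul {a b : V} {r : Path a b} {x : A} {w : PathsIn V}
    (h : PA.OccursIn w (PA.basis ⟨a, b, r⟩ * x)) :
    ∃ (c : V) (u : Path b c), PA.OccursIn ⟨b, c, u⟩ x ∧ w = ⟨a, c, r.comp u⟩ := by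
  obtain ⟨a', b', c, r', u, hr, hu, rfl⟩ := occursIn_mul h
  obtain ⟨rfl, rfl, hr⟩ := PathsIn.mk_inj (occursIn_basis.mp hr)
  obtain rfl := eq_of_heq hr
  exact ⟨c, u, hu, rfl⟩

theorem occursIn_mul_basis {b c : V} {r : Path b c} {x : A} {w : PathsIn V}
    (h : PA.OccursIn w (x * PA.basis ⟨b, c, r⟩)) :
    ∃ (a : V) (u : Path a b), PA.OccursIn ⟨a, b, u⟩ x ∧ w = ⟨a, c, u.comp r⟩ := by
  obtain ⟨a, b', c', u, r', hu, hr, rfl⟩ := occursIn_mul h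
  obtain ⟨rfl, rfl, hr⟩ := PathsIn.mk_inj (occursIn_basis.mp hr)
  obtain rfl := eq_of_heq hr
  exact ⟨a, u, hu, rfl⟩

theorem occursIn_basis_mul_mul_basis {a b c d : V} {r : Path a b} {s : Path c d} {x : A}
    {w : PathsIn V} (h : PA.OccursIn w (PA.basis ⟨a, b, r⟩ * x * PA.basis ⟨c, d, s⟩)) :
    ∃ u : Path b c, PA.OccursIn ⟨b, c, u⟩ x ∧ w = ⟨a, d, (r.comp u).comp s⟩ := by
  obtain ⟨a', v, hv, rfl⟩ := occursIn_mul_basis h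
  obtain ⟨c', u, hu, h⟩ := occursIn_basis_mul hv
  obtain ⟨rfl, rfl, h⟩ := PathsIn.mk_inj h
  obtain rfl := eq_of_heq h
  exact ⟨u, hu, rfl⟩

theorem repr_mul_basis_comp (x : A) {a b c : V} (u : Path a b) (r : Path b c) :
    PA.basis.repr (x * PA.basis ⟨b, c, r⟩) ⟨a, c, u.comp r⟩ = PA.basis.repr x ⟨a, b, u⟩ := by
  classical
  have key : (Finsupp.lapply ⟨a, c, u.comp r⟩ ∘ₗ PA.basis.repr.toLinearMap ∘ₗ
      LinearMap.mulRight k (PA.basis ⟨b, c, r⟩)) =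
      Finsupp.lapply ⟨a, b, u⟩ ∘ₗ PA.basis.repr.toLinearMap := by
    refine PA.basis.ext fun ⟨a', b', w⟩ => ?_
    simp only [LinearMap.comp_apply, LinearMap.mulRight_apply, LinearEquiv.coe_coe,
      Finsupp.lapply_apply, Module.Basis.repr_self]
    by_cases hb : b' = b
    · subst hb
      rw [PA.mul_matched, Module.Basis.repr_self, Finsupp.single_apply, Finsupp.single_apply]
      congr 1
      refine propext ⟨fun h => ?_, fun h => ?_⟩
      · obtain ⟨rfl, -, h⟩ := PathsIn.mk_inj h
        rw [Path.comp_inj_left.mp (eq_of_heq h)]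
      · obtain ⟨rfl, -, h⟩ := PathsIn.mk_inj h
        rw [eq_of_heq h]
    · rw [PA.mul_unmatched w r hb, map_zero, Finsupp.single_eq_of_ne]
      · rfl
      · intro h
        exact hb (PathsIn.mk_inj h).2.1.symm
  exact congrArg (fun L => L x) key

theorem repr_basis_mul_comp (x : A) {a b c : V} (r : Path a b) (u : Path b c) :
    PA.basis.repr (PA.basis ⟨a, b, r⟩ * x) ⟨a, c, r.comp u⟩ = PA.basis.repr x ⟨b, c, u⟩ := by
  classical
  have key : (Finsupp.lapply ⟨a, c, r.comp u⟩ ∘ₗ PA.basis.repr.toLinearMap ∘ₗ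
      LinearMap.mulLeft k (PA.basis ⟨a, b, r⟩)) =
      Finsupp.lapply ⟨b, c, u⟩ ∘ₗ PA.basis.repr.toLinearMap := by
    refine PA.basis.ext fun ⟨a', b', w⟩ => ?_
    simp only [LinearMap.comp_apply, LinearMap.mulLeft_apply, LinearEquiv.coe_coe,
      Finsupp.lapply_apply, Module.Basis.repr_self]
    by_cases hb : b = a'
    · subst hb
      rw [PA.mul_matched, Module.Basis.repr_self, Finsupp.single_apply, Finsupp.single_apply]
      congr 1
      refine propext ⟨fun h => ?_, fun h => ?_⟩
      · obtain ⟨-, rfl, h⟩ := PathsIn.mk_inj h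
        rw [Path.comp_inj_right.mp (eq_of_heq h)]
      · obtain ⟨-, rfl, h⟩ := PathsIn.mk_inj h
        rw [eq_of_heq h]
    · rw [PA.mul_unmatched r w hb, map_zero, Finsupp.single_eq_of_ne]
      · rfl
      · intro h
        exact hb (PathsIn.mk_inj h).1
  exact congrArg (fun L => L x) key

variable (PA) in
noncomputable def supported (s : Set (PathsIn V)) : Submodule k A :=
  (Finsupp.supported k k s).map PA.basis.repr.symm.toLinearMap

theorem mem_supported {s : Set (PathsIn V)} {z : A} :
    z ∈ PA.supported s ↔ ∀ u, PA.OccursIn u z → u ∈ s := by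
  simp only [supported, Submodule.mem_map_equiv, LinearEquiv.symm_symm, Finsupp.mem_supported,
    Set.subset_def, Finset.mem_coe, Finsupp.mem_support_iff, OccursIn]

theorem supported_union (s t : Set (PathsIn V)) :
    PA.supported (s ∪ t) = PA.supported s ⊔ PA.supported t := by
  simp only [supported, Finsupp.supported_union, Submodule.map_sup]

theorem supported_mono {s t : Set (PathsIn V)} (h : s ⊆ t) : PA.supported s ≤ PA.supported t :=
  Submodule.map_mono (Finsupp.supported_mono h)

theorem eq_zero_of_mem_supported_compl {s : Set (PathsIn V)} {z : A} (h : z ∈ PA.supported s)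
    (h' : z ∈ PA.supported sᶜ) : z = 0 :=
  PA.eq_zero_of_forall_not_occursIn fun u hu => mem_supported.mp h' u hu (mem_supported.mp h u hu)

theorem supported_le {s : Set (PathsIn V)} {K : Submodule k A}
    (h : ∀ u ∈ s, PA.basis u ∈ K) : PA.supported s ≤ K := by
  intro z hz
  rw [← PA.sum_repr z]
  exact K.sum_mem fun u hu =>
    K.smul_mem _ (h u (mem_supported.mp hz u (Finsupp.mem_support_iff.mp hu)))

end Paths

section Division

variable (PA : IsPathAlgebra k V A) (O : AdmissibleOrder V)

theorem exists_isTip {z : A} (hz : z ≠ 0) : ∃ t, IsTip PA O z t := by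
  let _ : LinearOrder (PathsIn V) :=
    { le := O.le, le_refl := O.refl, le_trans := O.trans, le_antisymm := O.antisymm,
      le_total := O.total, toDecidableLE := Classical.decRel _ }
  obtain ⟨t, ht, hmax⟩ := Finset.exists_max_image (PA.basis.repr z).support id
    (Finsupp.support_nonempty_iff.mpr (by simpa using hz))
  exact ⟨t, Finsupp.mem_support_iff.mp ht, fun w hw => hmax w (Finsupp.mem_support_iff.mpr hw)⟩

theorem induction_on_tip {C : A → Prop} (zero : C 0)
    (step : ∀ z t, IsTip PA O z t → (∀ z', (∀ u, PA.OccursIn u z' → O.lt u t) → C z') → C z)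
    (z : A) : C z := by
  suffices H : ∀ t z, (∀ u, PA.OccursIn u z → O.le u t) → C z by
    by_cases hz : z = 0
    · exact hz ▸ zero
    · obtain ⟨t, ht⟩ := exists_isTip PA O hz
      exact H t z ht.2
  intro t
  induction t using O.wf.induction with
  | _ t ih =>
    intro z hz
    by_cases hz0 : z = 0
    · exact hz0 ▸ zero
    obtain ⟨tz, htz⟩ := exists_isTip PA O hz0
    refine step z tz htz fun z' hz' => ?_
    by_cases hz'0 : z' = 0
    · exact hz'0 ▸ zero
    obtain ⟨t', ht'⟩ := exists_isTip PA O hz'0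
    exact ih t' (O.lt_of_lt_of_le (hz' t' ht'.1) (hz tz htz.1)) z' ht'.2

variable (G : Set A)

def nontips : Set (PathsIn V) := {u | ∀ g ∈ G, ∀ t, IsTip PA O g t → ¬ t.Divides u}

/-- The two-sided ideal generated by `G`, presented as a `k`-span. -/
noncomputable def sandwichSpan : Submodule k A :=
  Submodule.span k {x | ∃ g ∈ G, ∃ r s : PathsIn V, x = PA.basis r * g * PA.basis s}

variable {PA O G}

theorem basis_mem_supported {s : Set (PathsIn V)} {u : PathsIn V} :
    PA.basis u ∈ PA.supported s ↔ u ∈ s := by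
  simp [mem_supported, occursIn_basis]

theorem OccursIn.of_sub {x y : A} {u : PathsIn V} (h : PA.OccursIn u (x - y)) :
    PA.OccursIn u x ∨ PA.OccursIn u y := by
  by_contra! h'
  exact h (by simp_all [OccursIn])

theorem lt_of_occursIn_sub {x y : A} {t : PathsIn V} (hx : ∀ u, PA.OccursIn u x → O.le u t)
    (hy : ∀ u, PA.OccursIn u y → O.le u t)
    (hxy : PA.basis.repr x t = PA.basis.repr y t) :
    ∀ u, PA.OccursIn u (x - y) → O.lt u t := by
  intro u hu
  refine ⟨(OccursIn.of_sub hu).elim (hx u) (hy u), ?_⟩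
  rintro rfl
  exact hu (by simp [hxy])

theorem exists_sandwich_of_isTip_divides {g : A} {tg tz : PathsIn V}
    (htg : IsTip PA O g tg) (hdiv : tg.Divides tz) :
    ∃ r s : PathsIn V, PA.basis.repr (PA.basis r * g * PA.basis s) tz = PA.basis.repr g tg ∧
      ∀ u, PA.OccursIn u (PA.basis r * g * PA.basis s) → O.le u tz := by
  obtain ⟨b, c, t⟩ := tg
  obtain ⟨a, d, r, s, rfl⟩ := hdiv
  refine ⟨⟨a, b, r⟩, ⟨c, d, s⟩, ?_, fun u hu => ?_⟩
  · rw [repr_mul_basis_comp, repr_basis_mul_comp]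
  · obtain ⟨u, hu', rfl⟩ := occursIn_basis_mul_mul_basis hu
    exact O.le_comp_comp r s (htg.2 _ hu')

theorem exists_mem_supported_nontips_sub_mem (z : A) :
    ∃ z' ∈ PA.supported (nontips PA O G), z - z' ∈ PA.sandwichSpan G := by
  induction z using induction_on_tip PA O with
  | zero => exact ⟨0, zero_mem _, by simp⟩
  | step z tz htz ih =>
    by_cases hred : ∃ g ∈ G, ∃ tg, IsTip PA O g tg ∧ tg.Divides tz
    · obtain ⟨g, hg, tg, htg, hdiv⟩ := hred
      obtain ⟨r, s, hcoef, hle⟩ := exists_sandwich_of_isTip_divides htg hdiv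
      set h := (PA.basis.repr z tz / PA.basis.repr g tg) • (PA.basis r * g * PA.basis s)
      obtain ⟨z', hz', hmem⟩ := ih (z - h) <| lt_of_occursIn_sub htz.2
        (fun u hu => hle u hu.of_smul)
        (by rw [map_smul, Finsupp.smul_apply, hcoef, smul_eq_mul, div_mul_cancel₀ _ htg.1])
      refine ⟨z', hz', ?_⟩
      rw [show z - z' = z - h - z' + h by abel]
      exact add_mem hmem (Submodule.smul_mem _ _ (Submodule.subset_span ⟨g, hg, r, s, rfl⟩))
    · push Not at hred
      set h := PA.basis.repr z tz • PA.basis tz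
      obtain ⟨z', hz', hmem⟩ := ih (z - h) <| lt_of_occursIn_sub htz.2
        (fun u hu => occursIn_basis.mp hu.of_smul ▸ O.refl _) (by simp [h])
      refine ⟨z' + h, add_mem hz' (Submodule.smul_mem _ _ (basis_mem_supported.mpr hred)), ?_⟩
      rwa [show z - (z' + h) = z - h - z' by abel]

theorem comp_mem_nontips {a b c : V} {x : Path a b} {y : Path b c}
    (hx : ⟨a, b, x⟩ ∈ nontips PA O G) (hy : ⟨b, c, y⟩ ∈ nontips PA O G)
    (hxy : ∀ g ∈ G, ∀ t, IsTip PA O g t →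
      ¬ (PathsIn.OverlapsLeftWith ⟨b, c, y⟩ t ∧ PathsIn.OverlapsLeftWith t ⟨a, b, x⟩)) :
    ⟨a, c, x.comp y⟩ ∈ nontips PA O G := by
  intro g hg t ht hdiv
  rcases PathsIn.divides_comp_or_overlaps hdiv with h | h | h
  exacts [hx g hg t ht h, hy g hg t ht h, hxy g hg t ht h]

end Division

section NormalPathSet

variable {PA : IsPathAlgebra k V A} {B : Type} [Ring B] [Algebra k B]

variable (PA) in
/-- `f` maps the paths of `N` to a `k`-basis of its image. -/
structure IsNormalPathSet (f : A →ₐ[k] B) (N : Set (PathsIn V)) : Prop where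
  exists_mem_supported : ∀ z, ∃ z' ∈ PA.supported N, f z' = f z
  eq_zero : ∀ z ∈ PA.supported N, f z = 0 → z = 0

namespace IsNormalPathSet

variable {f : A →ₐ[k] B} {N : Set (PathsIn V)}

theorem map_mul_basis_nil_eq_zero (hN : IsNormalPathSet PA f N) {a b : V} {r : Path a b}
    (hr : ∀ c (u : Path c a), ⟨c, a, u⟩ ∈ N → ⟨c, b, u.comp r⟩ ∈ N) {z : A}
    (hz : f (z * PA.basis ⟨a, b, r⟩) = 0) : f (z * PA.basis ⟨a, a, Path.nil⟩) = 0 := by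
  obtain ⟨z', hz'N, hfz'⟩ := hN.exists_mem_supported z
  have hz'r : z' * PA.basis ⟨a, b, r⟩ = 0 := by
    refine hN.eq_zero _ (mem_supported.mpr fun w hw => ?_) (by rw [map_mul, hfz', ← map_mul, hz])
    obtain ⟨c, u, hu, rfl⟩ := occursIn_mul_basis hw
    exact hr c u (mem_supported.mp hz'N _ hu)
  have hz'e : z' * PA.basis ⟨a, a, Path.nil⟩ = 0 := by
    refine PA.eq_zero_of_forall_not_occursIn fun w hw => ?_
    obtain ⟨c, u, hu, rfl⟩ := occursIn_mul_basis hw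
    exact hu (by rw [← repr_mul_basis_comp z' u r, hz'r, map_zero, Finsupp.zero_apply])
  rw [map_mul, ← hfz', ← map_mul, hz'e, map_zero]

theorem map_basis_nil_mul_eq_zero (hN : IsNormalPathSet PA f N) {a b : V} {r : Path a b}
    (hr : ∀ c (u : Path b c), ⟨b, c, u⟩ ∈ N → ⟨a, c, r.comp u⟩ ∈ N) {z : A}
    (hz : f (PA.basis ⟨a, b, r⟩ * z) = 0) : f (PA.basis ⟨b, b, Path.nil⟩ * z) = 0 := by
  obtain ⟨z', hz'N, hfz'⟩ := hN.exists_mem_supported z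
  have hrz' : PA.basis ⟨a, b, r⟩ * z' = 0 := by
    refine hN.eq_zero _ (mem_supported.mpr fun w hw => ?_) (by rw [map_mul, hfz', ← map_mul, hz])
    obtain ⟨c, u, hu, rfl⟩ := occursIn_basis_mul hw
    exact hr c u (mem_supported.mp hz'N _ hu)
  have hez' : PA.basis ⟨b, b, Path.nil⟩ * z' = 0 := by
    refine PA.eq_zero_of_forall_not_occursIn fun w hw => ?_
    obtain ⟨c, u, hu, -⟩ := occursIn_basis_mul hw
    exact hu (by rw [← repr_basis_mul_comp z' r u, hrz', map_zero, Finsupp.zero_apply])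
  rw [map_mul, ← hfz', ← map_mul, hez', map_zero]

theorem mul_nil_eq_of_mul_eq (hN : IsNormalPathSet PA f N) (hf : Function.Surjective f)
    {a b : V} {r : Path a b} (hr : ∀ c (u : Path c a), ⟨c, a, u⟩ ∈ N → ⟨c, b, u.comp r⟩ ∈ N)
    (x y : B) (h : x * f (PA.basis ⟨a, b, r⟩) = y * f (PA.basis ⟨a, b, r⟩)) :
    x * f (PA.basis ⟨a, a, Path.nil⟩) = y * f (PA.basis ⟨a, a, Path.nil⟩) := by
  obtain ⟨x, rfl⟩ := hf x
  obtain ⟨y, rfl⟩ := hf y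
  have := hN.map_mul_basis_nil_eq_zero hr (z := x - y)
    (by rw [map_mul, map_sub, sub_mul, h, sub_self])
  rwa [map_mul, map_sub, sub_mul, sub_eq_zero] at this

theorem nil_mul_eq_of_mul_eq (hN : IsNormalPathSet PA f N) (hf : Function.Surjective f)
    {a b : V} {r : Path a b} (hr : ∀ c (u : Path b c), ⟨b, c, u⟩ ∈ N → ⟨a, c, r.comp u⟩ ∈ N)
    (x y : B) (h : f (PA.basis ⟨a, b, r⟩) * x = f (PA.basis ⟨a, b, r⟩) * y) :
    f (PA.basis ⟨b, b, Path.nil⟩) * x = f (PA.basis ⟨b, b, Path.nil⟩) * y := by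
  obtain ⟨x, rfl⟩ := hf x
  obtain ⟨y, rfl⟩ := hf y
  have := hN.map_basis_nil_mul_eq_zero hr (z := x - y)
    (by rw [map_mul, map_sub, mul_sub, h, sub_self])
  rwa [map_mul, map_sub, mul_sub, sub_eq_zero] at this

theorem inter_of_ker_eq_sup {C : Type} [Ring C] [Algebra k C] (hN : IsNormalPathSet PA f N)
    {g : A →ₐ[k] C} {S : Set (PathsIn V)}
    (hker : LinearMap.ker g.toLinearMap = LinearMap.ker f.toLinearMap ⊔ PA.supported Sᶜ)
    (hsplit : LinearMap.ker f.toLinearMap ≤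
      (LinearMap.ker f.toLinearMap ⊓ PA.supported S) ⊔ PA.supported Sᶜ) :
    IsNormalPathSet PA g (N ∩ S) where
  exists_mem_supported z := by
    obtain ⟨z', hz'N, hfz'⟩ := hN.exists_mem_supported z
    rw [← Set.inter_union_compl N S, supported_union, Submodule.mem_sup] at hz'N
    obtain ⟨y, hy, w, hw, rfl⟩ := hz'N
    have hgw : g w = 0 := by
      have : w ∈ LinearMap.ker g.toLinearMap :=
        hker ▸ Submodule.mem_sup_right (supported_mono Set.inter_subset_right hw)
      simpa using this
    have hgz : g z = g y + g w := by
      have : z - (y + w) ∈ LinearMap.ker g.toLinearMap :=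
        hker ▸ Submodule.mem_sup_left (by simp [hfz'])
      simpa [sub_eq_zero] using this
    exact ⟨y, hy, by rw [hgz, hgw, add_zero]⟩
  eq_zero z hz hgz := by
    have hzker : z ∈ LinearMap.ker g.toLinearMap := by simpa using hgz
    rw [hker, Submodule.mem_sup] at hzker
    obtain ⟨i, hi, m, hm, rfl⟩ := hzker
    obtain ⟨a, ⟨ha, haS⟩, b, hb, rfl⟩ := Submodule.mem_sup.mp (hsplit hi)
    have hza : a + b + m - a = 0 := eq_zero_of_mem_supported_compl
      (Submodule.sub_mem _ (supported_mono Set.inter_subset_right hz) haS)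
      (by rw [show a + b + m - a = b + m by abel]; exact add_mem hb hm)
    rw [sub_eq_zero] at hza
    rw [hza] at hz ⊢
    exact hN.eq_zero a (supported_mono Set.inter_subset_left hz) (by simpa using ha)

end IsNormalPathSet

end NormalPathSet

section Quotient

variable {PA : IsPathAlgebra k V A} {O : AdmissibleOrder V} {G I : Set A}
  {Λ : Type} [Ring Λ] [Algebra k Λ]

theorem sandwichSpan_le_ker (hGI : G ⊆ I) (P : QuotPresentation k I Λ) :
    PA.sandwichSpan G ≤ LinearMap.ker P.proj.toLinearMap := by
  refine Submodule.span_le.mpr ?_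
  rintro _ ⟨g, hg, r, s, rfl⟩
  simp [(P.ker g).mpr (hGI hg)]

theorem isNormalPathSet_nontips (hG : IsGroebnerBasis PA O I G) (P : QuotPresentation k I Λ) :
    IsNormalPathSet PA P.proj (nontips PA O G) where
  exists_mem_supported z := by
    obtain ⟨z', hz', hmem⟩ := exists_mem_supported_nontips_sub_mem (PA := PA) (O := O) (G := G) z
    have := sandwichSpan_le_ker hG.1 P hmem
    rw [LinearMap.mem_ker, AlgHom.toLinearMap_apply, map_sub, sub_eq_zero] at this
    exact ⟨z', hz', this.symm⟩
  eq_zero z hz hPz := by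
    by_contra hz0
    obtain ⟨g, hg, tg, tz, htg, htz, hdiv⟩ := hG.2 z ((P.ker z).mp hPz) hz0
    exact mem_supported.mp hz tz htz.1 g hg tg htg hdiv

theorem ker_le_sandwichSpan (hG : IsGroebnerBasis PA O I G) (P : QuotPresentation k I Λ) :
    LinearMap.ker P.proj.toLinearMap ≤ PA.sandwichSpan G := by
  intro z hz
  obtain ⟨z', hz', hmem⟩ := exists_mem_supported_nontips_sub_mem (PA := PA) (O := O) (G := G) z
  have hz'ker : z' ∈ LinearMap.ker P.proj.toLinearMap := by
    simpa using sub_mem hz (sandwichSpan_le_ker hG.1 P hmem)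
  rwa [(isNormalPathSet_nontips hG P).eq_zero z' hz' hz'ker, sub_zero] at hmem

theorem mul_basis_mul_mem_supported (x y : A) (u : PathsIn V) :
    x * PA.basis u * y ∈ PA.supported {w | u.Divides w} := by
  obtain ⟨b, c, t⟩ := u
  refine mem_supported.mpr fun w hw => ?_
  obtain ⟨a, c', d, v, s, hv, -, rfl⟩ := occursIn_mul hw
  obtain ⟨a, r, -, h⟩ := occursIn_mul_basis hv
  obtain ⟨rfl, rfl, h⟩ := PathsIn.mk_inj h
  obtain rfl := eq_of_heq h
  exact ⟨a, d, r, s, rfl⟩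

variable (PA) in
theorem ker_comp_eq_sup (u : PathsIn V) (P : QuotPresentation k I Λ) {Γ : Type} [Ring Γ]
    [Algebra k Γ] (PΓ : QuotPresentation k (ringIdealSpan {P.proj (PA.basis u)}) Γ) :
    LinearMap.ker (PΓ.proj.comp P.proj).toLinearMap =
      LinearMap.ker P.proj.toLinearMap ⊔ PA.supported {w | u.Divides w} := by
  refine le_antisymm (fun z hz => ?_) (sup_le (fun z hz => by simp_all) ?_)
  · have hPz : P.proj z ∈ ringIdealSpan {P.proj (PA.basis u)} := (PΓ.ker _).mp (by simpa using hz)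
    have hspan : AddSubgroup.closure {y : Λ | ∃ r s : Λ, ∃ t ∈ ({P.proj (PA.basis u)} : Set Λ),
        y = r * t * s} ≤
        (Submodule.map P.proj.toLinearMap (PA.supported {w | u.Divides w})).toAddSubgroup := by
      refine AddSubgroup.closure_le _ |>.mpr ?_
      rintro _ ⟨r, s, t, rfl, rfl⟩
      obtain ⟨r, rfl⟩ := P.surj r
      obtain ⟨s, rfl⟩ := P.surj s
      exact ⟨r * PA.basis u * s, mul_basis_mul_mem_supported r s u, by simp⟩
    obtain ⟨m, hm, hPm⟩ := hspan hPz
    have hzm : z - m ∈ LinearMap.ker P.proj.toLinearMap := by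
      rw [LinearMap.mem_ker, map_sub, hPm, AlgHom.toLinearMap_apply, sub_self]
    exact Submodule.mem_sup.mpr ⟨z - m, hzm, m, hm, sub_add_cancel z m⟩
  · refine supported_le fun w hw => ?_
    obtain ⟨b, c, t⟩ := u
    obtain ⟨a, d, r, s, rfl⟩ := hw
    have hfac : PA.basis ⟨a, d, (r.comp t).comp s⟩ =
        PA.basis ⟨a, b, r⟩ * PA.basis ⟨b, c, t⟩ * PA.basis ⟨c, d, s⟩ := by
      rw [PA.mul_matched, PA.mul_matched]
    have : P.proj (PA.basis ⟨a, d, (r.comp t).comp s⟩) ∈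
        ringIdealSpan {P.proj (PA.basis ⟨b, c, t⟩)} :=
      AddSubgroup.subset_closure ⟨_, _, _, rfl, by rw [hfac, map_mul, map_mul]⟩
    simpa using (PΓ.ker _).mpr this

section StrictMonomial

variable {va vb xp yq : V} {α : va ⟶ vb} {p : Path xp va} {q : Path vb yq}

theorem ker_le_sup_supported_avoiding (hG : IsStrictMonomialGB PA O α I G p q)
    (P : QuotPresentation k I Λ) :
    LinearMap.ker P.proj.toLinearMap ≤
      (LinearMap.ker P.proj.toLinearMap ⊓ PA.supported {w | AvoidsArrow α w}) ⊔
        PA.supported {w | AvoidsArrow α w}ᶜ := by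
  refine (ker_le_sandwichSpan hG.gb P).trans (Submodule.span_le.mpr ?_)
  rintro _ ⟨g, hg, ⟨a, b, r⟩, ⟨c, d, s⟩, rfl⟩
  by_cases hrs : AvoidsArrow α ⟨a, b, r⟩ ∧ AvoidsArrow α ⟨c, d, s⟩ ∧
    g ≠ PA.basis (pathPAQ α p q)
  · obtain ⟨hr, hs, hgpaq⟩ := hrs
    refine Submodule.mem_sup_left ⟨by simp [(P.ker g).mpr (hG.gb.1 hg)], ?_⟩
    refine mem_supported.mpr fun w hw => ?_
    obtain ⟨u, hu, rfl⟩ := occursIn_basis_mul_mul_basis hw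
    exact (avoidsArrow_comp α _ _).mpr
      ⟨(avoidsArrow_comp α _ _).mpr ⟨hr, hG.others_avoid g hg hgpaq _ hu⟩, hs⟩
  · refine Submodule.mem_sup_right (mem_supported.mpr fun w hw hw' => ?_)
    obtain ⟨u, hu, rfl⟩ := occursIn_basis_mul_mul_basis hw
    obtain ⟨⟨hr, hu'⟩, hs⟩ := (avoidsArrow_comp α _ _).mp hw' |>.imp_left
      (avoidsArrow_comp α _ _).mp
    obtain rfl : g = PA.basis (pathPAQ α p q) := by
      by_contra h
      exact hrs ⟨hr, hs, h⟩
    exact hu' (occursIn_basis.mp hu ▸ ⟨xp, yq, p, q, rfl⟩)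

theorem isNormalPathSet_nontips_avoiding (hG : IsStrictMonomialGB PA O α I G p q)
    (P : QuotPresentation k I Λ) {Γ : Type} [Ring Γ] [Algebra k Γ]
    (PΓ : QuotPresentation k (ringIdealSpan {P.proj (PA.basis (arrowPath α))}) Γ) :
    IsNormalPathSet PA (PΓ.proj.comp P.proj) (nontips PA O G ∩ {w | AvoidsArrow α w}) := by
  refine (isNormalPathSet_nontips hG.gb P).inter_of_ker_eq_sup ?_
    (ker_le_sup_supported_avoiding hG P)
  rw [ker_comp_eq_sup PA (arrowPath α) P PΓ]
  congr
  ext w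
  simp [AvoidsArrow]

theorem comp_p_mem_nontips (hG : IsStrictMonomialGB PA O α I G p q) {c : V} {u : Path c xp}
    (hu : ⟨c, xp, u⟩ ∈ nontips PA O G) : ⟨c, va, u.comp p⟩ ∈ nontips PA O G :=
  comp_mem_nontips hu (fun g hg t ht => (hG.tips_no_divide g hg t ht).1)
    fun g hg t ht h => hG.tips_no_overlap_p g hg t ht h.1

theorem q_comp_mem_nontips (hG : IsStrictMonomialGB PA O α I G p q) {c : V} {u : Path yq c}
    (hu : ⟨yq, c, u⟩ ∈ nontips PA O G) : ⟨vb, c, q.comp u⟩ ∈ nontips PA O G :=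
  comp_mem_nontips (fun g hg t ht => (hG.tips_no_divide g hg t ht).2) hu
    fun g hg t ht h => hG.tips_no_overlap_q g hg t ht h.2

end StrictMonomial

end Quotient

end IsPathAlgebra

open IsPathAlgebra

/-- let `Λ = kQ/I` be a bound quiver algebra such that `I` possesses a strict
`α`-monomial Gröbner basis `𝒢_{p,q}`, and let `Γ = Λ/⟨ᾱ⟩`.  Then right multiplication by
`p` induces isomorphisms of left modules `Λ·𝔰(p) ≅ Λ·p̄` and `Γ·𝔰(p) ≅ Γ·p̄`, and left
multiplication by `q` induces isomorphisms of right modules `𝔱(q)·Λ ≅ q̄·Λ` and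
`𝔱(q)·Γ ≅ q̄·Γ` (the maps are the evident surjections, so the content is their
injectivity, stated elementwise below). -/
theorem mul_by_p_q_injective
    {k : Type} [Field k] {V : Type} [Quiver.{0} V] [Fintype V]
    [∀ a b : V, Fintype (a ⟶ b)]
    {A : Type} [Ring A] [Algebra k A] (PA : IsPathAlgebra k V A)
    (I : Set A) (hI : IsAdmissibleIdeal PA I)
    {Λ : Type} [Ring Λ] [Algebra k Λ] (P : QuotPresentation k I Λ)
    (O : AdmissibleOrder V) {va vb xp yq : V} (α : va ⟶ vb)
    (p : Quiver.Path xp va) (q : Quiver.Path vb yq) (G : Set A)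
    (hG : IsStrictMonomialGB PA O α I G p q)
    {Γ : Type} [Ring Γ] [Algebra k Γ]
    (PΓ : QuotPresentation k (ringIdealSpan {P.proj (PA.basis (arrowPath α))}) Γ) :
    (∀ x y : Λ, x * P.proj (PA.basis ⟨xp, va, p⟩) = y * P.proj (PA.basis ⟨xp, va, p⟩) →
      x * P.proj (PA.basis ⟨xp, xp, Quiver.Path.nil⟩) =
        y * P.proj (PA.basis ⟨xp, xp, Quiver.Path.nil⟩)) ∧
    (∀ x y : Γ, x * PΓ.proj (P.proj (PA.basis ⟨xp, va, p⟩)) =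
        y * PΓ.proj (P.proj (PA.basis ⟨xp, va, p⟩)) →
      x * PΓ.proj (P.proj (PA.basis ⟨xp, xp, Quiver.Path.nil⟩)) =
        y * PΓ.proj (P.proj (PA.basis ⟨xp, xp, Quiver.Path.nil⟩))) ∧
    (∀ x y : Λ, P.proj (PA.basis ⟨vb, yq, q⟩) * x = P.proj (PA.basis ⟨vb, yq, q⟩) * y →
      P.proj (PA.basis ⟨yq, yq, Quiver.Path.nil⟩) * x =
        P.proj (PA.basis ⟨yq, yq, Quiver.Path.nil⟩) * y) ∧
    (∀ x y : Γ, PΓ.proj (P.proj (PA.basis ⟨vb, yq, q⟩)) * x =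
        PΓ.proj (P.proj (PA.basis ⟨vb, yq, q⟩)) * y →
      PΓ.proj (P.proj (PA.basis ⟨yq, yq, Quiver.Path.nil⟩)) * x =
        PΓ.proj (P.proj (PA.basis ⟨yq, yq, Quiver.Path.nil⟩)) * y) := by
  have hΛ := isNormalPathSet_nontips hG.gb P
  have hΓ := isNormalPathSet_nontips_avoiding hG P PΓ
  have hΓsurj : Function.Surjective (PΓ.proj.comp P.proj) := PΓ.surj.comp P.surj
  refine ⟨hΛ.mul_nil_eq_of_mul_eq P.surj fun _ _ hu => comp_p_mem_nontips hG hu,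
    hΓ.mul_nil_eq_of_mul_eq hΓsurj fun _ _ hu => ⟨comp_p_mem_nontips hG hu.1,
      (avoidsArrow_comp α _ _).mpr ⟨hu.2, hG.p_avoids⟩⟩,
    hΛ.nil_mul_eq_of_mul_eq P.surj fun _ _ hu => q_comp_mem_nontips hG hu,
    hΓ.nil_mul_eq_of_mul_eq hΓsurj fun _ _ hu => ⟨q_comp_mem_nontips hG hu.1,
      (avoidsArrow_comp α _ _).mpr ⟨hG.q_avoids, hu.2⟩⟩⟩
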